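/- If (b_n) is a positive sequence belonging to GS(−b*) with b*<1, then for any fixed integer k_0≥1, lim_{n→∞} n b_n / (Σ_{k=k_0}^n b_k) = 1 − b*. -/

import Mathlib

open MeasureTheory Filter Set ProbabilityTheory Asymptotics
open scoped ENNReal NNReal

noncomputable section

/-- A positive sequence belongs to `GS(c)` if `n (1 - v (n-1) / v n) → c`. -/
def GSseq (c : ℝ) (v : ℕ → ℝ) : Prop :=
  Tendsto (fun n : ℕ => (n : ℝ) * (1 - v (n - 1) / v n)) atTop (nhds c)

/-- Marginal density of `X`. -/
def fdens (g : ℝ → ℝ → ℝ) (t : ℝ) : ℝ := ∫ y : ℝ, g t y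

/-- Regression function `r(t) = E[Y | X = t]`. -/
def reg (g : ℝ → ℝ → ℝ) (t : ℝ) : ℝ := (∫ y : ℝ, y * g t y) / fdens g t

/-- Conditional variance `Var[Y | X = t]`. -/
def condVar (g : ℝ → ℝ → ℝ) (t : ℝ) : ℝ :=
  (∫ y : ℝ, (y - reg g t) ^ 2 * g t y) / fdens g t

/-- Integrand appearing in the definition of `ψ_{a,q,x}`. -/
def psiIntegrand (K : ℝ → ℝ) (g : ℝ → ℝ → ℝ) (a q x u : ℝ) (p : ℝ × ℝ × ℝ) : ℝ :=
  p.1 ^ (-a) *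
    (Real.exp (u * p.1 ^ (a - q) * K p.2.1 * (p.2.2 - reg g x) / fdens g x) - 1) * g x p.2.2

/-- The function `ψ_{a,q,x}`. -/
def psiFn (K : ℝ → ℝ) (g : ℝ → ℝ → ℝ) (a q x : ℝ) (u : ℝ) : ℝ :=
  (1 - q) * ∫ p in (Icc (0:ℝ) 1) ×ˢ (univ : Set (ℝ × ℝ)), psiIntegrand K g a q x u p

/-- The Fenchel–Legendre transform `I_{a,q,x}` of `ψ_{a,q,x}`, as a `[0,∞]`-valued function. -/
def rateI (K : ℝ → ℝ) (g : ℝ → ℝ → ℝ) (a q x : ℝ) (t : ℝ) : ℝ≥0∞ :=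
  ⨆ u : ℝ, ENNReal.ofReal (u * t - psiFn K g a q x u)

/-- A good rate function: nonnegative (enforced by the codomain) with compact level sets. -/
def IsGoodRate (I : ℝ → ℝ≥0∞) : Prop := ∀ c : NNReal, IsCompact {t : ℝ | I t ≤ (c : ℝ≥0∞)}

/-- `(Z_n)` satisfies a large deviations principle with speed `ν_n` and good rate function `I`. -/
def HasLDP {Ω : Type*} [MeasurableSpace Ω] (μ : Measure Ω) (Z : ℕ → Ω → ℝ)
    (ν : ℕ → ℝ) (I : ℝ → ℝ≥0∞) : Prop :=
  Tendsto ν atTop atTop ∧ IsGoodRate I ∧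
    ∀ B : Set ℝ, MeasurableSet B →
      (-(⨅ t ∈ interior B, (I t : EReal)) ≤
          liminf (fun n : ℕ =>
            (((ν n)⁻¹ * Real.log (μ {ω | Z n ω ∈ B}).toReal : ℝ) : EReal)) atTop ∧
        limsup (fun n : ℕ =>
            (((ν n)⁻¹ * Real.log (μ {ω | Z n ω ∈ B}).toReal : ℝ) : EReal)) atTop ≤
          -(⨅ t ∈ closure B, (I t : EReal)))

/-- Révész's stochastic approximation estimator of the regression function at `x`. -/
def revesz {Ω : Type*} (K : ℝ → ℝ) (γ h : ℕ → ℝ) (X Y : ℕ → Ω → ℝ) (x r0 : ℝ) :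
    ℕ → Ω → ℝ
  | 0 => fun _ => r0
  | n + 1 => fun ω =>
      (1 - γ (n+1) * (h (n+1))⁻¹ * K ((x - X (n+1) ω) / h (n+1))) *
          revesz K γ h X Y x r0 n ω
        + γ (n+1) * (h (n+1))⁻¹ * Y (n+1) ω * K ((x - X (n+1) ω) / h (n+1))

/-- Weighted average `(Σ_{k=1}^n q_k)⁻¹ Σ_{k=1}^n q_k u_k`. -/
def avgSeq {Ω : Type*} (q : ℕ → ℝ) (u : ℕ → Ω → ℝ) (n : ℕ) (ω : Ω) : ℝ :=
  (∑ k ∈ Finset.Icc 1 n, q k)⁻¹ * ∑ k ∈ Finset.Icc 1 n, q k * u k ω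

/-- The auxiliary stochastic approximation algorithm `ρ_n(x)`. -/
def rhoAux {Ω : Type*} (K : ℝ → ℝ) (γ h : ℕ → ℝ) (X Y : ℕ → Ω → ℝ) (x r0 fx rx : ℝ)
    (n0 : ℕ) : ℕ → Ω → ℝ
  | 0 => fun _ => rx
  | n + 1 => fun ω =>
      if n + 1 ≤ n0 - 2 then rx
      else if n + 1 = n0 - 1 then revesz K γ h X Y x r0 (n0 - 1) ω
      else
        (1 - γ (n+1) * fx) * rhoAux K γ h X Y x r0 fx rx n0 n ω
          + γ (n+1) * (fx - (h (n+1))⁻¹ * K ((x - X (n+1) ω) / h (n+1))) * rx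
          + γ (n+1) * (h (n+1))⁻¹ * Y (n+1) ω * K ((x - X (n+1) ω) / h (n+1))

/-- `η_k(x) = (Y_k − r(x)) K((x − X_k)/h_k)`. -/
def etaSeq {Ω : Type*} (K : ℝ → ℝ) (h : ℕ → ℝ) (X Y : ℕ → Ω → ℝ) (x rx : ℝ)
    (k : ℕ) (ω : Ω) : ℝ :=
  (Y k ω - rx) * K ((x - X k ω) / h k)

/-- `Ψ_n(x) = f(x)⁻¹ (Σ_{k=1}^n q_k)⁻¹ Σ_{k=n_0−1}^n q_k h_k⁻¹ (η_k(x) − E[η_k(x)])`. -/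
def PsiSeq {Ω : Type*} [MeasurableSpace Ω] (μ : Measure Ω) (K : ℝ → ℝ) (h q : ℕ → ℝ)
    (X Y : ℕ → Ω → ℝ) (x rx fx : ℝ) (n0 n : ℕ) (ω : Ω) : ℝ :=
  fx⁻¹ * (∑ k ∈ Finset.Icc 1 n, q k)⁻¹ *
    ∑ k ∈ Finset.Icc (n0 - 1) n,
      q k * (h k)⁻¹ * (etaSeq K h X Y x rx k ω - ∫ ω', etaSeq K h X Y x rx k ω' ∂μ)

/-- Assumption (L1)/(M1) on the kernel `K`. -/
def AssumpK (K : ℝ → ℝ) : Prop :=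
  (∀ z, 0 ≤ K z) ∧ Continuous K ∧ (∃ C, ∀ z, K z ≤ C) ∧
    (∫ z : ℝ, K z) = 1 ∧ (∫ z : ℝ, z * K z) = 0 ∧ Integrable fun z : ℝ => z ^ 2 * K z

/-- Assumption (L3)/(M3) on the joint density `g`. -/
def AssumpG (g : ℝ → ℝ → ℝ) (x : ℝ) : Prop :=
  (∀ t, ContDiff ℝ 2 fun s => g s t) ∧
    (∀ j : ℕ, j ≤ 2 →
      (∃ C, ∀ s, |∫ t : ℝ, t ^ j * g s t| ≤ C) ∧
        ContinuousAt (fun s => ∫ t : ℝ, t ^ j * g s t) x) ∧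
    (∀ j : ℝ, j ∈ Icc (2:ℝ) 3 → ∃ C, ∀ s, (∫ t : ℝ, |t| ^ j * g s t) ≤ C) ∧
    (∀ j : ℕ, j ≤ 1 →
      Integrable (fun t : ℝ => |t| ^ (j:ℕ) * |deriv (fun s => g s t) x|) ∧
        (∃ C, ∀ s, |∫ t : ℝ, t ^ j * iteratedDeriv 2 (fun s' => g s' t) s| ≤ C) ∧
        ContinuousAt (fun s => ∫ t : ℝ, t ^ j * iteratedDeriv 2 (fun s' => g s' t) s) x)

/-- Assumption (L4)/(M4): exponential moments, bounded and continuous at `x`. -/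
def AssumpExp (g : ℝ → ℝ → ℝ) (x : ℝ) : Prop :=
  ∀ u : ℝ, ContinuousAt (fun t => ∫ y : ℝ, Real.exp (u * y) * g t y) x ∧
    ∃ C, ∀ t, (∫ y : ℝ, Real.exp (u * y) * g t y) ≤ C

/-- Assumption on the stepsizes `(γ_n)` from (L2)/(M2). -/
def AssumpSteps (γ : ℕ → ℝ) (α : ℝ) : Prop :=
  GSseq (-α) γ ∧ α ∈ Ioc (3/4 : ℝ) 1 ∧ (∀ n : ℕ, 1 ≤ n → 0 < γ n) ∧
    Tendsto (fun n : ℕ =>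
      (n : ℝ) * γ n / Real.log (∑ k ∈ Finset.Icc 1 n, γ k)) atTop atTop

/-- `(X, Y)` has joint density `g` with respect to Lebesgue measure on `ℝ²`. -/
def JointDensity {Ω : Type*} [MeasurableSpace Ω] (μ : Measure Ω) (X Y : Ω → ℝ)
    (g : ℝ → ℝ → ℝ) : Prop :=
  Measurable X ∧ Measurable Y ∧
    Measure.map (fun ω => (X ω, Y ω)) μ =
      (volume : Measure (ℝ × ℝ)).withDensity fun p => ENNReal.ofReal (g p.1 p.2)

end

noncomputable section

/-- The derivative `ψ'_{a,q,x}` (explicit integral formula). -/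
def psiD (K : ℝ → ℝ) (g : ℝ → ℝ → ℝ) (a q x : ℝ) (u : ℝ) : ℝ :=
  (1 - q) * ∫ p in (Icc (0:ℝ) 1) ×ˢ (univ : Set (ℝ × ℝ)),
    p.1 ^ (-q) * K p.2.1 * ((p.2.2 - reg g x) / fdens g x) *
      Real.exp (u * p.1 ^ (a - q) * K p.2.1 * (p.2.2 - reg g x) / fdens g x) * g x p.2.2

/-- The second derivative `ψ''_{a,q,x}` (explicit integral formula). -/
def psiDD (K : ℝ → ℝ) (g : ℝ → ℝ → ℝ) (a q x : ℝ) (u : ℝ) : ℝ :=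
  (1 - q) * ∫ p in (Icc (0:ℝ) 1) ×ˢ (univ : Set (ℝ × ℝ)),
    p.1 ^ (a - 2*q) * (K p.2.1) ^ 2 * ((p.2.2 - reg g x) / fdens g x) ^ 2 *
      Real.exp (u * p.1 ^ (a - q) * K p.2.1 * (p.2.2 - reg g x) / fdens g x) * g x p.2.2

end

/-! With `S n = ∑_{k0 ≤ k ≤ n} b k` and `ρ n = b (n - 1) / b n`, the quotient `u n = S n / (n b n)`
satisfies `u (n + 1) = (1 - c (n + 1) / (n + 1)) u n + 1 / (n + 1)` with `c n = n (1 - ρ n) + ρ n`,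
and `c n → 1 - b*` because `ρ n → 1`. The error `u n - 1 / (1 - b*)` is thus multiplied at each step
by `1 - c (n + 1) / (n + 1)` and perturbed by `o(1 / n)`; since the harmonic-like series
`∑ c (n + 1) / (n + 1)` diverges, the product of these factors tends to zero and so does the error. -/

open Finset

lemma le_exp_neg_sum_mul_of_le_one_sub_mul {z t : ℕ → ℝ} (hz : ∀ n, 0 ≤ z n)
    (h : ∀ n, z (n + 1) ≤ (1 - t n) * z n) (n : ℕ) :
    z n ≤ Real.exp (-∑ k ∈ range n, t k) * z 0 := by
  induction n with
  | zero => simp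
  | succ n ih =>
    calc z (n + 1) ≤ (1 - t n) * z n := h n
      _ ≤ Real.exp (-t n) * z n := by
          gcongr
          · exact hz n
          · linarith [Real.add_one_le_exp (-t n)]
      _ ≤ Real.exp (-t n) * (Real.exp (-∑ k ∈ range n, t k) * z 0) := by gcongr
      _ = Real.exp (-∑ k ∈ range (n + 1), t k) * z 0 := by
          rw [sum_range_succ, ← mul_assoc, ← Real.exp_add]
          ring_nf

lemma tendsto_zero_of_le_one_sub_mul {z t : ℕ → ℝ} (ht : ¬Summable t)
    (h : ∀ᶠ n in atTop, 0 ≤ t n ∧ 0 ≤ z n ∧ z (n + 1) ≤ (1 - t n) * z n) :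
    Tendsto z atTop (nhds 0) := by
  obtain ⟨N, hN⟩ := eventually_atTop.mp h
  have hN' : ∀ n, 0 ≤ t (n + N) ∧ 0 ≤ z (n + N) ∧ z (n + 1 + N) ≤ (1 - t (n + N)) * z (n + N) :=
    fun n => by simpa only [add_right_comm n 1 N] using hN (n + N) (Nat.le_add_left N n)
  have hsum : Tendsto (fun n => ∑ k ∈ range n, t (k + N)) atTop atTop :=
    (not_summable_iff_tendsto_nat_atTop_of_nonneg fun n => (hN' n).1).mp
      (mt (summable_nat_add_iff N).mp ht)
  rw [← tendsto_add_atTop_iff_nat N]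
  refine squeeze_zero (fun n => (hN' n).2.1)
    (le_exp_neg_sum_mul_of_le_one_sub_mul (fun n => (hN' n).2.1) (fun n => (hN' n).2.2)) ?_
  simpa using (Real.tendsto_exp_atBot.comp (tendsto_neg_atTop_atBot.comp hsum)).mul_const (z (0 + N))

lemma tendsto_zero_of_eq_one_sub_mul_add_mul {w s e : ℕ → ℝ} (hs : ¬Summable s)
    (hs01 : ∀ᶠ n in atTop, 0 ≤ s n ∧ s n ≤ 1) (he : Tendsto e atTop (nhds 0))
    (hw : ∀ᶠ n in atTop, w (n + 1) = (1 - s n) * w n + s n * e n) :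
    Tendsto w atTop (nhds 0) := by
  rw [Metric.tendsto_nhds]
  intro ε hε
  -- the excess of `|w n|` over `ε / 2` contracts by the factor `1 - s n`
  set z : ℕ → ℝ := fun n => max (|w n| - ε / 2) 0
  have hz : Tendsto z atTop (nhds 0) := by
    refine tendsto_zero_of_le_one_sub_mul hs ?_
    filter_upwards [hs01, hw, (Metric.tendsto_nhds.mp he) (ε / 2) (by positivity)]
      with n ⟨hs0, hs1⟩ hwn hen
    rw [Real.dist_eq, sub_zero] at hen
    refine ⟨hs0, le_max_right _ _, max_le ?_ (by positivity)⟩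
    have hstep : |w (n + 1)| ≤ (1 - s n) * |w n| + s n * (ε / 2) := by
      calc |w (n + 1)| ≤ |(1 - s n) * w n| + |s n * e n| := by rw [hwn]; exact abs_add_le _ _
        _ ≤ (1 - s n) * |w n| + s n * (ε / 2) := by
          rw [abs_mul, abs_mul, abs_of_nonneg (by linarith : 0 ≤ 1 - s n), abs_of_nonneg hs0]
          gcongr
    have : (1 - s n) * (|w n| - ε / 2) ≤ (1 - s n) * z n :=
      mul_le_mul_of_nonneg_left (le_max_left _ _) (by linarith)
    linarith
  filter_upwards [hz.eventually_lt_const (half_pos hε)] with n hn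
  rw [Real.dist_eq, sub_zero]
  linarith [le_max_left (|w n| - ε / 2) 0]

lemma not_summable_div_natCast_of_tendsto {c : ℕ → ℝ} {L : ℝ} (hL : 0 < L)
    (hc : Tendsto c atTop (nhds L)) : ¬Summable fun n : ℕ => c n / n := by
  intro hsum
  have hharm : Summable fun n : ℕ => L / 2 * (1 / n) := by
    refine hsum.of_norm_bounded_eventually_nat ?_
    filter_upwards [hc.eventually_const_le (half_lt_self hL)] with n hn
    rw [Real.norm_eq_abs, abs_of_nonneg (by positivity), ← mul_div_assoc, mul_one]
    gcongr
  exact Real.not_summable_one_div_natCast ((summable_mul_left_iff (by positivity)).mp hharm)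

lemma tendsto_inv_of_eq_one_sub_div_mul_add_inv {u c : ℕ → ℝ} {L : ℝ} (hL : 0 < L)
    (hc : Tendsto c atTop (nhds L))
    (hu : ∀ᶠ n : ℕ in atTop, u (n + 1) = (1 - c (n + 1) / (n + 1)) * u n + 1 / (n + 1)) :
    Tendsto u atTop (nhds L⁻¹) := by
  have hc' : Tendsto (fun n => c (n + 1)) atTop (nhds L) := hc.comp (tendsto_add_atTop_nat 1)
  have hc_pos : ∀ᶠ n in atTop, 0 < c (n + 1) := hc'.eventually_const_lt hL
  have hs : ¬Summable fun n : ℕ => c (n + 1) / (n + 1) := by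
    have := mt (summable_nat_add_iff 1).mp (not_summable_div_natCast_of_tendsto hL hc)
    simpa only [Nat.cast_add, Nat.cast_one] using this
  have hs01 : ∀ᶠ n : ℕ in atTop, 0 ≤ c (n + 1) / (n + 1) ∧ c (n + 1) / (n + 1) ≤ 1 := by
    filter_upwards [hc_pos, hc'.eventually_le_const (lt_add_one L),
      tendsto_natCast_atTop_atTop.eventually_ge_atTop L] with n hpos hle hn
    exact ⟨by positivity, (div_le_one (by positivity)).mpr (by linarith)⟩
  have he : Tendsto (fun n => (c (n + 1))⁻¹ - L⁻¹) atTop (nhds 0) := by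
    simpa using (hc'.inv₀ hL.ne').sub_const L⁻¹
  rw [← tendsto_sub_const_iff L⁻¹, sub_self]
  refine tendsto_zero_of_eq_one_sub_mul_add_mul hs hs01 he ?_
  filter_upwards [hu, hc_pos] with n hun hpos
  rw [hun]
  field_simp
  ring

lemma GSseq.tendsto_ratio {γ : ℝ} {v : ℕ → ℝ} (hv : GSseq γ v) :
    Tendsto (fun n => v (n - 1) / v n) atTop (nhds 1) := by
  have h : Tendsto (fun n : ℕ => 1 - (n : ℝ)⁻¹ * (n * (1 - v (n - 1) / v n))) atTop
      (nhds (1 - 0 * γ)) :=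
    tendsto_const_nhds.sub (tendsto_inv_atTop_nhds_zero_nat.mul hv)
  rw [zero_mul, sub_zero] at h
  refine h.congr' ?_
  filter_upwards [eventually_ne_atTop 0] with n hn
  field_simp
  ring

theorem GS_sum_ratio_limit_general (b : ℕ → ℝ) (bs : ℝ) (hb : ∀ n, 1 ≤ n → 0 < b n)
    (hGS : GSseq (-bs) b) (hbs : bs < 1) (k0 : ℕ) :
    Tendsto (fun n : ℕ => (n:ℝ) * b n / ∑ k ∈ Finset.Icc k0 n, b k)
      atTop (nhds (1 - bs)) := by
  set S : ℕ → ℝ := fun n => ∑ k ∈ Icc k0 n, b k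
  set c : ℕ → ℝ := fun n => n * (1 - b (n - 1) / b n) + b (n - 1) / b n
  have hc : Tendsto c atTop (nhds (1 - bs)) := by
    simpa only [neg_add_eq_sub] using hGS.add hGS.tendsto_ratio
  have hrec : ∀ᶠ n : ℕ in atTop, S (n + 1) / ((n + 1 : ℕ) * b (n + 1)) =
      (1 - c (n + 1) / (n + 1)) * (S n / (n * b n)) + 1 / (n + 1) := by
    filter_upwards [eventually_ge_atTop k0, eventually_ge_atTop 1] with n hk0n hn
    have hbn := (hb n hn).ne'
    have hbn1 := (hb (n + 1) (by omega)).ne'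
    have hn0 : (n : ℝ) ≠ 0 := by positivity
    simp only [S, c, sum_Icc_succ_top (by omega : k0 ≤ n + 1), Nat.add_sub_cancel]
    push_cast
    field_simp
    ring
  have hlim := (tendsto_inv_of_eq_one_sub_div_mul_add_inv (u := fun n => S n / (n * b n))
    (sub_pos.mpr hbs) hc hrec).inv₀ (inv_ne_zero (sub_pos.mpr hbs).ne')
  simpa only [inv_inv, inv_div] using hlim

theorem GS_sum_ratio_limit (b : ℕ → ℝ) (bs : ℝ) (hb : ∀ n, 1 ≤ n → 0 < b n)
    (hGS : GSseq (-bs) b) (hbs : bs < 1) (k0 : ℕ) (hk0 : 1 ≤ k0) :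
    Tendsto (fun n : ℕ => (n:ℝ) * b n / ∑ k ∈ Finset.Icc k0 n, b k)
      atTop (nhds (1 - bs)) :=
  GS_sum_ratio_limit_general b bs hb hGS hbs k0
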